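/- Let p = ⟨P0, …, Pk⟩ be a path in an MPDAG G. Then p is possibly causal (i.e., G contains no edge Pi ← Pj for 0 ≤ i < j ≤ k) if and only if G does not contain any directed path Pi ← … ← Pj for 0 ≤ i < j ≤ k. -/

import Mathlib

open MeasureTheory
open scoped ENNReal

namespace CondAdj

/-- Edge marks of a (partial) mixed graph.  `Mark.none` means "no edge". -/
inductive Mark : Type
  | none
  | tail
  | arrow
  | circle
  deriving DecidableEq

/-- A marked graph on node type `V`:  `m a b` is the edge mark at `b` of the edge
between `a` and `b` (`Mark.none` iff `a` and `b` are not adjacent).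
A directed edge `a → b` has a tail at `a` and an arrowhead at `b`;
an undirected edge `a − b` (resp. `a ∘-∘ b`) has tails (resp. circles) at both ends;
a bidirected edge `a ↔ b` has arrowheads at both ends. -/
structure MG (V : Type) where
  m : V → V → Mark
  none_symm : ∀ a b, m a b = Mark.none ↔ m b a = Mark.none
  irrefl : ∀ a, m a a = Mark.none

namespace MG

variable {V : Type}

/-- `a` and `b` are adjacent. -/
def Adj (G : MG V) (a b : V) : Prop := G.m a b ≠ Mark.none

/-- Directed edge `a → b`. -/
def DirE (G : MG V) (a b : V) : Prop := G.m a b = Mark.arrow ∧ G.m b a = Mark.tail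

/-- Bidirected edge `a ↔ b`. -/
def BidirE (G : MG V) (a b : V) : Prop := G.m a b = Mark.arrow ∧ G.m b a = Mark.arrow

/-- Undirected edge (`a − b` or `a ∘-∘ b`). -/
def UndirE (G : MG V) (a b : V) : Prop :=
  (G.m a b = Mark.tail ∧ G.m b a = Mark.tail) ∨
    (G.m a b = Mark.circle ∧ G.m b a = Mark.circle)

/-- Edge with an arrowhead at `b` (i.e. `a *→ b`). -/
def IntoE (G : MG V) (a b : V) : Prop := G.m a b = Mark.arrow

/-- `b` is a descendant of `a` (via a directed path, possibly of length 0). -/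
def Desc (G : MG V) (a b : V) : Prop := Relation.ReflTransGen G.DirE a b

/-- Descendants of a set of nodes. -/
def De (G : MG V) (A : Set V) : Set V := {b | ∃ a ∈ A, G.Desc a b}

/-- Ancestors of a set of nodes. -/
def An (G : MG V) (A : Set V) : Set V := {a | ∃ b ∈ A, G.Desc a b}

/-- `p 0, …, p n` is a path in `G` (distinct nodes, consecutive ones adjacent). -/
def IsPath (G : MG V) (p : ℕ → V) (n : ℕ) : Prop :=
  1 ≤ n ∧ (∀ i ≤ n, ∀ j ≤ n, p i = p j → i = j) ∧ ∀ i < n, G.Adj (p i) (p (i + 1))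

/-- A path from `X` to `Y`. -/
def IsPathFromTo (G : MG V) (p : ℕ → V) (n : ℕ) (X Y : Set V) : Prop :=
  G.IsPath p n ∧ p 0 ∈ X ∧ p n ∈ Y

/-- A possibly causal (possibly directed) path: no arrowhead pointing backwards,
i.e. there is no edge `p i ←* p j` for `i < j`. -/
def PossCausal (G : MG V) (p : ℕ → V) (n : ℕ) : Prop :=
  ∀ i j, i < j → j ≤ n → ¬ G.IntoE (p j) (p i)

/-- A causal (directed) path. -/
def Causal (G : MG V) (p : ℕ → V) (n : ℕ) : Prop := ∀ i < n, G.DirE (p i) (p (i + 1))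

/-- The non-endpoint node at position `i` of `p` is a collider. -/
def ColliderAt (G : MG V) (p : ℕ → V) (i : ℕ) : Prop :=
  G.IntoE (p (i - 1)) (p i) ∧ G.IntoE (p (i + 1)) (p i)

/-- The non-endpoint node at position `i` of `p` is a definite non-collider. -/
def DefNonColliderAt (G : MG V) (p : ℕ → V) (i : ℕ) : Prop :=
  G.DirE (p i) (p (i - 1)) ∨ G.DirE (p i) (p (i + 1)) ∨
    (G.UndirE (p (i - 1)) (p i) ∧ G.UndirE (p i) (p (i + 1)) ∧
      ¬ G.Adj (p (i - 1)) (p (i + 1)))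

/-- A definite status path. -/
def DefStatus (G : MG V) (p : ℕ → V) (n : ℕ) : Prop :=
  ∀ i, 1 ≤ i → i < n → G.ColliderAt p i ∨ G.DefNonColliderAt p i

/-- The set `W` blocks the path `p`: some non-collider on `p` is in `W`, or some
collider on `p` has no descendant in `W`. -/
def Blocks (G : MG V) (W : Set V) (p : ℕ → V) (n : ℕ) : Prop :=
  ∃ i, 1 ≤ i ∧ i < n ∧
    ((¬ G.ColliderAt p i ∧ p i ∈ W) ∨
      (G.ColliderAt p i ∧ ∀ d, G.Desc (p i) d → d ∉ W))

/-- Possible descendants (via possibly causal paths; every node is its own). -/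
def PossDe (G : MG V) (A : Set V) : Set V :=
  A ∪ {b | ∃ a ∈ A, ∃ p n, G.IsPath p n ∧ G.PossCausal p n ∧ p 0 = a ∧ p n = b}

/-- Possible ancestors (via possibly causal paths; every node is its own). -/
def PossAn (G : MG V) (A : Set V) : Set V :=
  A ∪ {a | ∃ b ∈ A, ∃ p n, G.IsPath p n ∧ G.PossCausal p n ∧ p 0 = a ∧ p n = b}

end MG

variable {V : Type}

/-- The path `p` is proper w.r.t. `X`: only its first node is in `X`. -/
def Proper (p : ℕ → V) (n : ℕ) (X : Set V) : Prop :=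
  ∀ i, 1 ≤ i → i ≤ n → p i ∉ X

namespace MG

variable {V : Type}

/-- Possible mediators: the nodes other than those in `X` lying on proper possibly
causal paths from `X` to `Y`. -/
def PossMed (G : MG V) (X Y : Set V) : Set V :=
  {w | ∃ p n, G.IsPathFromTo p n X Y ∧ Proper p n X ∧ G.PossCausal p n ∧
      ∃ i, 1 ≤ i ∧ i ≤ n ∧ p i = w}

/-- The forbidden set: possible descendants of the possible mediators. -/
def Forb (G : MG V) (X Y : Set V) : Set V := G.PossDe (G.PossMed X Y)

/-- Mediators: the nodes other than those in `X` lying on proper causal paths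
from `X` to `Y`. -/
def Med (G : MG V) (X Y : Set V) : Set V :=
  {w | ∃ p n, G.IsPathFromTo p n X Y ∧ Proper p n X ∧ G.Causal p n ∧
      ∃ i, 1 ≤ i ∧ i ≤ n ∧ p i = w}

/-- The forbidden set of a DAG: descendants of the mediators. -/
def ForbD (G : MG V) (X Y : Set V) : Set V := G.De (G.Med X Y)

/-- Parents of a node. -/
def Pa (G : MG V) (b : V) : Set V := {a | G.DirE a b}

/-- Parents of a set of nodes:  `(⋃ w ∈ W, Pa w) \ W`. -/
def PaSet (G : MG V) (W : Set V) : Set V := {a | ∃ w ∈ W, G.DirE a w} \ W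

/-- No directed cycles. -/
def Acyclic (G : MG V) : Prop := ∀ a, ¬ Relation.TransGen G.DirE a a

/-- A DAG: all edges directed, no directed cycles. -/
def IsDAG (G : MG V) : Prop :=
  (∀ a b, G.Adj a b → G.DirE a b ∨ G.DirE b a) ∧ G.Acyclic

/-- A partially directed acyclic graph: edges are `→` or `−`, no directed cycles. -/
def IsPDG (G : MG V) : Prop :=
  (∀ a b, G.Adj a b →
      G.DirE a b ∨ G.DirE b a ∨ (G.m a b = Mark.tail ∧ G.m b a = Mark.tail)) ∧
    G.Acyclic

/-- `a → b ← c` is an unshielded collider. -/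
def UnshieldedCollider (G : MG V) (a b c : V) : Prop :=
  G.DirE a b ∧ G.DirE c b ∧ a ≠ c ∧ ¬ G.Adj a c

/-- The class `[G]` of DAGs represented by a partially directed graph `G`: the DAGs
with the same nodes, adjacencies and unshielded colliders as `G` in which every
directed edge of `G` is directed the same way. -/
def rep (G : MG V) : Set (MG V) :=
  {D | D.IsDAG ∧ (∀ a b, D.Adj a b ↔ G.Adj a b) ∧ (∀ a b, G.DirE a b → D.DirE a b) ∧
      ∀ a b c, (D.UnshieldedCollider a b c ↔ G.UnshieldedCollider a b c)}

/-- A maximally oriented PDAG (MPDAG): a PDAG, representing a nonempty class of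
DAGs, whose orientations are complete (every undirected edge is oriented both
ways by DAGs in the represented class). -/
def IsMPDAG (G : MG V) : Prop :=
  G.IsPDG ∧ G.rep.Nonempty ∧
    ∀ a b, G.UndirE a b → (∃ D ∈ G.rep, D.DirE a b) ∧ ∃ D ∈ G.rep, D.DirE b a

end MG

section Density

variable {V : Type} [Fintype V] [DecidableEq V]

/-- Override the coordinates of `v` in `A` by the values `w`. -/
noncomputable def override (v : V → ℝ) (A : Finset V) (w : {x : V // x ∈ A} → ℝ) :
    V → ℝ :=
  fun i => if h : i ∈ A then w ⟨i, h⟩ else v i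

/-- The marginal density of the coordinates in `A` (integrating out `Aᶜ`). -/
noncomputable def marg (f : (V → ℝ) → ℝ≥0∞) (A : Finset V) (v : V → ℝ) : ℝ≥0∞ :=
  ∫⁻ w : {x : V // x ∈ Aᶜ} → ℝ, f (override v Aᶜ w)

/-- The conditional density `f(a | b)` of the coordinates in `A` given those in `B`. -/
noncomputable def condD (f : (V → ℝ) → ℝ≥0∞) (A B : Finset V) (v : V → ℝ) : ℝ≥0∞ :=
  marg f (A ∪ B) v / marg f B v

/-- A (strictly positive) joint density on `V → ℝ`. -/
def IsDensity (f : (V → ℝ) → ℝ≥0∞) : Prop :=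
  Measurable f ∧ (∫⁻ v : V → ℝ, f v) = 1 ∧ ∀ v, f v ≠ 0 ∧ f v ≠ ⊤

/-- A family of interventional densities: `obs` is the observational density
`f(v)`, and `int X x` is the interventional density `f(v | do(X = x))`. -/
structure IntFamily (V : Type) [Fintype V] [DecidableEq V] where
  obs : (V → ℝ) → ℝ≥0∞
  int : Finset V → (V → ℝ) → (V → ℝ) → ℝ≥0∞

-- Parents of a node, as a finset.
open Classical in
noncomputable def paFin (G : MG V) (i : V) : Finset V :=
  Finset.univ.filter fun j => G.DirE j i

-- The family `F` is consistent with the causal DAG `G` (i.e. `G` is a causal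
-- Bayesian network compatible with `F`): every interventional density satisfies
-- the truncated factorization.
open Classical in
def Consistent (F : IntFamily V) (G : MG V) : Prop :=
  (∀ x, F.int ∅ x = F.obs) ∧
    ∀ (X : Finset V) (x v : V → ℝ),
      F.int X x v =
        if ∀ i ∈ X, v i = x i then
          ∏ i ∈ Xᶜ, condD F.obs {i} (paFin G i) v
        else 0

/-- The conditional interventional density `f(a | do(x), z)` (where the value of
the intervention `do(X = x)` is read off from `v`). -/
noncomputable def doCond (F : IntFamily V) (X A Z : Finset V) (v : V → ℝ) : ℝ≥0∞ :=
  marg (F.int X v) (A ∪ Z ∪ X) v / marg (F.int X v) (Z ∪ X) v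

/-- The conditional adjustment functional
`∫ f(y | x, z, s) f(s | z) ds`  (resp. `f(y | x, z)` if `S = ∅`). -/
noncomputable def adjRHS (f : (V → ℝ) → ℝ≥0∞) (X Y Z S : Finset V) (v : V → ℝ) :
    ℝ≥0∞ :=
  if S = ∅ then condD f Y (X ∪ Z) v
  else
    ∫⁻ w : {x : V // x ∈ S} → ℝ,
      condD f Y (X ∪ Z ∪ S) (override v S w) * condD f S Z (override v S w)

/-- `S` is a conditional adjustment set relative to `(X, Y, Z)` in the causal
MPDAG `G`: for every density consistent with `G` (i.e. with every DAG in `[G]`),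
`f(y | do(x), z)` is given by the conditional adjustment functional. -/
def CondAdjSet (G : MG V) (X Y Z S : Finset V) : Prop :=
  ∀ F : IntFamily V, IsDensity F.obs → (∀ D ∈ G.rep, Consistent F D) →
    ∀ v : V → ℝ, doCond F X Y Z v = adjRHS F.obs X Y Z S v

/-- `S` is a conditional adjustment set relative to `(X, Y, Z)` in the causal DAG `D`. -/
def CondAdjSetDAG (D : MG V) (X Y Z S : Finset V) : Prop :=
  ∀ F : IntFamily V, IsDensity F.obs → Consistent F D →
    ∀ v : V → ℝ, doCond F X Y Z v = adjRHS F.obs X Y Z S v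

/-- `W` is an (unconditional) adjustment set relative to `(X, Y)` in the causal MPDAG `G`. -/
def AdjSet (G : MG V) (X Y W : Finset V) : Prop :=
  ∀ F : IntFamily V, IsDensity F.obs → (∀ D ∈ G.rep, Consistent F D) →
    ∀ v : V → ℝ, doCond F X Y ∅ v = adjRHS F.obs X Y ∅ W v

end Density

section Criteria

variable {V : Type}

/-- Every proper possibly causal path from `X` to `Y` in `G` starts with a
directed edge out of `X`. -/
def StartsDirected (G : MG V) (X Y : Set V) : Prop :=
  ∀ p n, G.IsPathFromTo p n X Y → Proper p n X → G.PossCausal p n → G.DirE (p 0) (p 1)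

/-- `W` blocks all proper non-causal definite status paths from `X` to `Y` in `G`. -/
def BlocksNonCausal (G : MG V) (X Y W : Set V) : Prop :=
  ∀ p n, G.IsPathFromTo p n X Y → Proper p n X → ¬ G.PossCausal p n →
    G.DefStatus p n → G.Blocks W p n

/-- The conditional adjustment criterion relative to `(X, Y, Z)` in an MPDAG. -/
def CondAdjCrit (G : MG V) (X Y Z S : Set V) : Prop :=
  StartsDirected G X Y ∧ S ∩ G.Forb X Y = ∅ ∧ BlocksNonCausal G X Y (S ∪ Z)

/-- The (unconditional) adjustment criterion relative to `(X, Y)` in an MPDAG. -/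
def AdjCrit (G : MG V) (X Y W : Set V) : Prop :=
  StartsDirected G X Y ∧ W ∩ G.Forb X Y = ∅ ∧ BlocksNonCausal G X Y W

/-- `W` blocks all proper non-causal paths from `X` to `Y` in a DAG. -/
def BlocksNonCausalD (G : MG V) (X Y W : Set V) : Prop :=
  ∀ p n, G.IsPathFromTo p n X Y → Proper p n X → ¬ G.Causal p n → G.Blocks W p n

/-- The conditional adjustment criterion relative to `(X, Y, Z)` in a DAG. -/
def CondAdjCritDAG (G : MG V) (X Y Z S : Set V) : Prop :=
  S ∩ G.ForbD X Y = ∅ ∧ BlocksNonCausalD G X Y (S ∪ Z)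

end Criteria

/-- A set, regarded as a finset (the node type is finite). -/
noncomputable def setFin {V : Type} [Fintype V] (s : Set V) : Finset V :=
  s.toFinite.toFinset

end CondAdj

theorem test_dummy : True := trivial

/-! If `p` is possibly causal and `G` has a directed path from `p j` back to `p i`, skip middle
nodes of shielded triples of `p i, …, p j` until no shielded triple remains. The result
`q₀, …, qₘ` is still possibly causal, so some DAG of `[G]` orients `q₀ → q₁` (this is where
maximality of the orientations enters), and Meek's rule R1 then propagates the orientation along
all of `q`. That DAG also contains every directed edge of `G`, hence a directed cycle. -/

theorem exists_strictMono_subchain_unshielded {R : ℕ → ℕ → Prop} {m : ℕ} {σ : ℕ → ℕ}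
    (hσ : StrictMono σ) (hstep : ∀ k < m, R (σ k) (σ (k + 1))) :
    ∃ m' τ, StrictMono τ ∧ τ 0 = σ 0 ∧ τ m' = σ m ∧ (∀ k < m', R (τ k) (τ (k + 1))) ∧
      ∀ k, k + 2 ≤ m' → ¬ R (τ k) (τ (k + 2)) := by
  induction m using Nat.strong_induction_on generalizing σ with
  | _ m ih =>
  by_cases hshield : ∃ a, a + 2 ≤ m ∧ R (σ a) (σ (a + 2))
  · obtain ⟨a, ham, hRa⟩ := hshield
    obtain ⟨ρ, hρ⟩ : ∃ ρ : ℕ → ℕ, ∀ k, ρ k = if k ≤ a then k else k + 1 := ⟨_, fun _ => rfl⟩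
    have hρmono : StrictMono ρ := fun k l hkl => by simp only [hρ]; split_ifs <;> omega
    have hρm : ρ (m - 1) = m := by rw [hρ, if_neg (by omega)]; omega
    obtain ⟨m', τ, hτ, hτ0, hτm, hτstep, hτunsh⟩ :=
      ih (m - 1) (by omega) (hσ.comp hρmono) fun k hk => by
        rcases lt_trichotomy k a with hka | rfl | hka
        · simpa [hρ, hka.le, Nat.succ_le_of_lt hka] using hstep k (by omega)
        · simpa [hρ] using hRa
        · simpa [hρ, show ¬ k ≤ a by omega, show ¬ k + 1 ≤ a by omega] using
            hstep (k + 1) (by omega)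
    exact ⟨m', τ, hτ, by simpa [hρ] using hτ0, by simpa [hρm] using hτm, hτstep, hτunsh⟩
  · push Not at hshield
    exact ⟨m, σ, hσ, rfl, rfl, hstep, hshield⟩

namespace CondAdj.MG

variable {V : Type} {G D : MG V}

theorem adj_of_intoE {a b : V} (h : G.IntoE a b) : G.Adj a b := fun hnone => by
  rw [IntoE, hnone] at h
  cases h

theorem IsPDG.dirE_of_intoE (hG : G.IsPDG) {a b : V} (h : G.IntoE a b) : G.DirE a b := by
  rcases hG.1 a b (adj_of_intoE h) with hab | hba | htail
  · exact hab
  · exact absurd (h.symm.trans hba.2) (by decide)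
  · exact absurd (h.symm.trans htail.1) (by decide)

theorem IsMPDAG.exists_mem_rep_dirE (hG : G.IsMPDAG) {a b : V} (hab : G.Adj a b)
    (hba : ¬ G.IntoE b a) : ∃ D ∈ G.rep, D.DirE a b := by
  rcases hG.1.1 a b hab with hdir | hdir | htail
  · obtain ⟨D, hD⟩ := hG.2.1
    exact ⟨D, hD, hD.2.2.1 a b hdir⟩
  · exact absurd hdir.1 hba
  · exact (hG.2.2 a b (Or.inl htail)).1

theorem PossCausal.comp_strictMono {p : ℕ → V} {n m : ℕ} {σ : ℕ → ℕ}
    (hpc : G.PossCausal p n) (hσ : StrictMono σ) (hm : σ m ≤ n) : G.PossCausal (p ∘ σ) m :=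
  fun _ _ hab hbm => hpc _ _ (hσ hab) ((hσ.monotone hbm).trans hm)

/-- Meek's rule R1, read in a DAG of `[G]`: orienting `b − c` as `c → b` would create an
unshielded collider `a → b ← c` that `G` does not have. -/
theorem dirE_of_mem_rep_of_not_adj (hD : D ∈ G.rep) {a b c : V} (hab : D.DirE a b)
    (hbc : G.Adj b c) (hcb : ¬ G.IntoE c b) (hac : a ≠ c) (hnac : ¬ G.Adj a c) :
    D.DirE b c := by
  rcases hD.1.1 b c ((hD.2.1 b c).2 hbc) with hbc' | hcb'
  · exact hbc'
  · have hcoll : G.UnshieldedCollider a b c :=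
      (hD.2.2.2 a b c).1 ⟨hab, hcb', hac, fun h => hnac ((hD.2.1 a c).1 h)⟩
    exact absurd hcoll.2.1.1 hcb

theorem transGen_of_mem_rep_of_unshielded (hD : D ∈ G.rep) {q : ℕ → V} {m : ℕ} (hm : 1 ≤ m)
    (hadj : ∀ k < m, G.Adj (q k) (q (k + 1)))
    (hunsh : ∀ k, k + 2 ≤ m → ¬ G.Adj (q k) (q (k + 2)))
    (hne : ∀ k, k + 2 ≤ m → q k ≠ q (k + 2))
    (hpc : G.PossCausal q m) (h01 : D.DirE (q 0) (q 1)) :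
    Relation.TransGen D.DirE (q 0) (q m) := by
  have hfwd : ∀ k < m, D.DirE (q k) (q (k + 1)) := by
    intro k
    induction k with
    | zero => exact fun _ => h01
    | succ k ih =>
      exact fun hk => dirE_of_mem_rep_of_not_adj hD (ih (by omega)) (hadj _ hk)
        (hpc _ _ (by omega) hk) (hne k hk) (hunsh k hk)
  refine (transGen_of_succ_of_lt (fun k l => D.DirE (q k) (q l)) (fun k hk => ?_) hm).lift q
    fun _ _ h => h
  simpa using hfwd k (Set.mem_Ico.1 hk).2

theorem IsMPDAG.not_transGen_of_possCausal (hG : G.IsMPDAG) {p : ℕ → V} {n : ℕ}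
    (hp : G.IsPath p n) (hpc : G.PossCausal p n) {i j : ℕ} (hij : i < j) (hjn : j ≤ n) :
    ¬ Relation.TransGen G.DirE (p j) (p i) := by
  obtain ⟨m, σ, hσ, hσ0, hσm, hstep, hunsh⟩ :=
    exists_strictMono_subchain_unshielded (R := fun a b => G.Adj (p a) (p b)) (m := j - i)
      (strictMono_id.const_add i) fun k hk => hp.2.2 (i + k) (by omega)
  simp only [id, Nat.add_zero, Nat.add_sub_cancel' hij.le] at hσ0 hσm
  have hm : 1 ≤ m := Nat.one_le_iff_ne_zero.2 fun h => by subst h; omega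
  have hσn : ∀ k ≤ m, σ k ≤ n := fun k hk => (hσ.monotone hk).trans (hσm ▸ hjn)
  have hq : G.PossCausal (p ∘ σ) m := hpc.comp_strictMono hσ (hσn m le_rfl)
  obtain ⟨D, hD, h01⟩ := hG.exists_mem_rep_dirE (hstep 0 hm) (hq 0 1 one_pos hm)
  have hne : ∀ k, k + 2 ≤ m → p (σ k) ≠ p (σ (k + 2)) := fun k hk h =>
    (hσ (by omega : k < k + 2)).ne (hp.2.1 _ (hσn k (by omega)) _ (hσn _ hk) h)
  have hfwd := transGen_of_mem_rep_of_unshielded hD hm hstep hunsh hne hq h01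
  rw [hσ0, hσm] at hfwd
  exact fun hback => hD.1.2 _ (hfwd.trans (Relation.TransGen.mono hD.2.2.1 _ _ hback))

end CondAdj.MG

/-- a path `p = ⟨p 0, …, p n⟩` in an MPDAG `G` is possibly
causal iff `G` contains no directed path from `p j` to `p i` for `i < j ≤ n`. -/
theorem possCausal_iff_no_backward_directed_path
    {V : Type} (G : CondAdj.MG V) (hG : G.IsMPDAG)
    (p : ℕ → V) (n : ℕ) (hp : G.IsPath p n) :
    G.PossCausal p n ↔
      ∀ i j, i < j → j ≤ n → ¬ Relation.TransGen G.DirE (p j) (p i) :=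
  ⟨fun hpc _ _ hij hjn => hG.not_transGen_of_possCausal hp hpc hij hjn,
    fun hno i j hij hjn hinto => hno i j hij hjn (.single (hG.1.dirE_of_intoE hinto))⟩
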